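/- arXiv:0802.3613 — 4 statements merged into one kernel-verified Lean document; each statement's English description precedes it below -/
import Mathlib

section
/- Let g : ℝ≥0 × Ω → ℝ^m (Ω ⊆ ℝ^d) satisfy: (i) there is a finite positive measure μ on ℝ≥0 such that for all x₁ ≤ x₂ and all u ∈ Ω, ‖g(x₂+,u) − g(x₁−,u)‖ ≤ μ([x₁,x₂]); (ii) there is L̂ > 0 with ‖g(x,u) − g(x,w)‖ ≤ L̂·‖u − w‖ for all x, u, w. Then for every function u : ℝ≥0 → Ω of bounded variation, the composed function x ↦ g(x, u(x)) has bounded total variation, and TV(g(·,u(·))) ≤ 2·μ(ℝ≥0) + L̂·TV(u). -/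
open MeasureTheory Set Function

/-! The jump of `x ↦ g x (u x)` over `[x₀, x₁]` splits, through `g x₁ (u x₀)`, into a Lipschitz part
bounded by `L̂ ‖u x₁ - u x₀‖` and a part bounded by `μ [x₀, x₁]`. The closed intervals of a partition
overlap only at their endpoints, so each point of `ℝ≥0` is counted at most twice and their measures
add up to at most `2 μ(ℝ≥0)`. -/

theorem Fin.pairwise_disjoint_Ico_castSucc_succ {α : Type*} [Preorder α] {N : ℕ}
    {x : Fin (N + 1) → α} (hx : Monotone x) :
    Pairwise (Disjoint on fun i : Fin N => Ico (x i.castSucc) (x i.succ)) :=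
  (pairwise_disjoint_on _).2 fun _ _ hij =>
    disjoint_iff_inf_le.mpr fun _ ⟨⟨_, h₁⟩, ⟨h₂, _⟩⟩ =>
      h₁.not_ge <| (hx (Fin.succ_le_castSucc_iff.mpr hij)).trans h₂

section PartitionMeasure

variable {α : Type*} [LinearOrder α] [TopologicalSpace α] [OrderClosedTopology α]
  [MeasurableSpace α] [OpensMeasurableSpace α] {N : ℕ} {x : Fin (N + 1) → α}

theorem sum_measure_Icc_castSucc_succ_le (μ : Measure α) (hx : StrictMono x) :
    ∑ i : Fin N, μ (Icc (x i.castSucc) (x i.succ)) ≤ 2 * μ univ := by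
  have hIco : ∑ i : Fin N, μ (Ico (x i.castSucc) (x i.succ)) ≤ μ univ :=
    sum_measure_le_measure_univ (fun _ _ => measurableSet_Ico.nullMeasurableSet)
      fun i _ j _ hij => (Fin.pairwise_disjoint_Ico_castSucc_succ hx.monotone hij).aedisjoint
  have hpoints : ∑ i : Fin N, μ {x i.succ} ≤ μ univ :=
    sum_measure_le_measure_univ (fun _ _ => (measurableSet_singleton _).nullMeasurableSet)
      fun i _ j _ hij => (disjoint_singleton.2 fun h =>
        hij (Fin.succ_injective _ (hx.injective h))).aedisjoint
  calc ∑ i : Fin N, μ (Icc (x i.castSucc) (x i.succ))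
      ≤ ∑ i : Fin N, (μ (Ico (x i.castSucc) (x i.succ)) + μ {x i.succ}) :=
        Finset.sum_le_sum fun i _ => by
          rw [← Ico_insert_right (hx Fin.castSucc_lt_succ).le, insert_eq, union_comm]
          exact measure_union_le _ _
    _ ≤ μ univ + μ univ := by rw [Finset.sum_add_distrib]; exact add_le_add hIco hpoints
    _ = 2 * μ univ := (two_mul _).symm

theorem sum_toReal_measure_Icc_castSucc_succ_le (μ : Measure α) [IsFiniteMeasure μ]
    (hx : StrictMono x) :
    ∑ i : Fin N, (μ (Icc (x i.castSucc) (x i.succ))).toReal ≤ 2 * (μ univ).toReal := by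
  rw [← ENNReal.toReal_sum fun _ _ => measure_ne_top μ _]
  simpa using ENNReal.toReal_mono (by finiteness) (sum_measure_Icc_castSucc_succ_le μ hx)

end PartitionMeasure

/-- Proposition 2.1 (total variation bound for the composed source term):
if `g` satisfies a measure-modulus of continuity in `x` and is Lipschitz in `u`,
then along any BV function `u` (with all partition sums bounded by `B`), every
partition sum of `x ↦ g x (u x)` is bounded by `2 μ(ℝ≥0) + Lhat B`. -/
theorem source_term_bounded_variation
    {d m : ℕ} (Ω : Set (EuclideanSpace ℝ (Fin d)))
    (g : ℝ → EuclideanSpace ℝ (Fin d) → EuclideanSpace ℝ (Fin m))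
    (μ : Measure ℝ) (hμ : IsFiniteMeasure μ)
    (hg_x : ∀ x₁ x₂ : ℝ, 0 ≤ x₁ → x₁ ≤ x₂ → ∀ u ∈ Ω,
      ‖g x₂ u - g x₁ u‖ ≤ (μ (Icc x₁ x₂)).toReal)
    (Lhat : ℝ) (hLhat : 0 < Lhat)
    (hg_u : ∀ x : ℝ, 0 ≤ x → ∀ u ∈ Ω, ∀ w ∈ Ω,
      ‖g x u - g x w‖ ≤ Lhat * ‖u - w‖)
    (u : ℝ → EuclideanSpace ℝ (Fin d)) (hu : ∀ x : ℝ, 0 ≤ x → u x ∈ Ω)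
    (B : ℝ)
    (huBV : ∀ (N : ℕ) (x : Fin (N + 1) → ℝ), StrictMono x → (∀ i, 0 ≤ x i) →
      ∑ i : Fin N, ‖u (x i.succ) - u (x i.castSucc)‖ ≤ B) :
    ∀ (N : ℕ) (x : Fin (N + 1) → ℝ), StrictMono x → (∀ i, 0 ≤ x i) →
      ∑ i : Fin N, ‖g (x i.succ) (u (x i.succ)) - g (x i.castSucc) (u (x i.castSucc))‖
        ≤ 2 * (μ univ).toReal + Lhat * B := by
  intro N x hx hx₀
  have hstep (i : Fin N) :
      ‖g (x i.succ) (u (x i.succ)) - g (x i.castSucc) (u (x i.castSucc))‖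
        ≤ Lhat * ‖u (x i.succ) - u (x i.castSucc)‖
          + (μ (Icc (x i.castSucc) (x i.succ))).toReal :=
    (norm_sub_le_norm_sub_add_norm_sub _ (g (x i.succ) (u (x i.castSucc))) _).trans <|
      add_le_add (hg_u _ (hx₀ _) _ (hu _ (hx₀ _)) _ (hu _ (hx₀ _)))
        (hg_x _ _ (hx₀ _) (hx Fin.castSucc_lt_succ).le _ (hu _ (hx₀ _)))
  calc ∑ i : Fin N, ‖g (x i.succ) (u (x i.succ)) - g (x i.castSucc) (u (x i.castSucc))‖
      ≤ ∑ i : Fin N, (Lhat * ‖u (x i.succ) - u (x i.castSucc)‖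
          + (μ (Icc (x i.castSucc) (x i.succ))).toReal) := Finset.sum_le_sum fun i _ => hstep i
    _ = Lhat * ∑ i : Fin N, ‖u (x i.succ) - u (x i.castSucc)‖
          + ∑ i : Fin N, (μ (Icc (x i.castSucc) (x i.succ))).toReal := by
        rw [Finset.sum_add_distrib, Finset.mul_sum]
    _ ≤ Lhat * B + 2 * (μ univ).toReal :=
        add_le_add (mul_le_mul_of_nonneg_left (huBV N x hx hx₀) hLhat.le)
          (sum_toReal_measure_Icc_castSucc_succ_le μ hx)
    _ = 2 * (μ univ).toReal + Lhat * B := add_comm _ _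
end

section
/- Consider the underflow gate coupling Ψ(u₁,u₂) = (b₁q₁ + b₂q₂, q₁²/(H₁ − H₂)) for the shallow water system, with uₗ = (Hₗ,Qₗ) written here as (Hₗ,qₗ). Let ū₁ = (H̄₁,Q̄₁), ū₂ = (H̄₂,Q̄₂) be sub-critical states (λ₁(ūₗ) < 0 < λ₂(ūₗ)) with H̄₁ > H̄₂ and Q̄₁ < 0. Then the determinant of the 2×2 matrix with columns DₗΨ(ū)·(1, λ₂(ūₗ)), l = 1,2, equals ((b₁λ₂(ū₁) + b₂λ₂(ū₂))·Q̄₁²)/(H̄₁ − H̄₂)² − (2 b₂ λ₂(ū₁) λ₂(ū₂) Q̄₁)/(H̄₁ − H̄₂), and this quantity is strictly positive. -/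
open Matrix

/-- Underflow gate coupling for shallow water: at sub-critical states with
`H̄₁ > H̄₂` and `Q̄₁ < 0`, the determinant of the matrix with columns
`DₗΨ(ū)·(1,λ₂(ūₗ))` equals
`(b₁λ₂(ū₁)+b₂λ₂(ū₂))Q̄₁²/(H̄₁−H̄₂)² − 2b₂λ₂(ū₁)λ₂(ū₂)Q̄₁/(H̄₁−H̄₂)`
and is strictly positive. -/
theorem underflow_gate_determinant
    (grav b1 b2 : ℝ) (hgrav : 0 < grav) (hb1 : 0 < b1) (hb2 : 0 < b2)
    (H1 Q1 H2 Q2 : ℝ) (hH1 : 0 < H1) (hH2 : 0 < H2)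
    (hsub1 : |Q1 / H1| < Real.sqrt (grav * H1))
    (hsub2 : |Q2 / H2| < Real.sqrt (grav * H2))
    (hH : H2 < H1) (hQ1 : Q1 < 0) :
    let lam21 : ℝ := Q1 / H1 + Real.sqrt (grav * H1)
    let lam22 : ℝ := Q2 / H2 + Real.sqrt (grav * H2)
    let M : Matrix (Fin 2) (Fin 2) ℝ :=
      !![b1 * lam21, b2 * lam22;
         -Q1 ^ 2 / (H1 - H2) ^ 2 + 2 * Q1 / (H1 - H2) * lam21,
         Q1 ^ 2 / (H1 - H2) ^ 2]
    M.det = (b1 * lam21 + b2 * lam22) * Q1 ^ 2 / (H1 - H2) ^ 2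
              - 2 * b2 * lam21 * lam22 * Q1 / (H1 - H2) ∧
    0 < M.det := by
  intro lam21 lam22 M
  have hd : 0 < H1 - H2 := by linarith
  have hl1 : 0 < lam21 := by
    have := neg_lt_of_abs_lt hsub1
    simp only [lam21]; linarith
  have hl2 : 0 < lam22 := by
    have := neg_lt_of_abs_lt hsub2
    simp only [lam22]; linarith
  have hdet : M.det = (b1 * lam21 + b2 * lam22) * Q1 ^ 2 / (H1 - H2) ^ 2
      - 2 * b2 * lam21 * lam22 * Q1 / (H1 - H2) := by
    simp [M, Matrix.det_fin_two_of]
    ring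
  refine ⟨hdet, ?_⟩
  rw [hdet]
  have h1 : 0 < (b1 * lam21 + b2 * lam22) * Q1 ^ 2 / (H1 - H2) ^ 2 := by
    apply div_pos
    · exact mul_pos (by positivity) (by nlinarith : (0:ℝ) < Q1 ^ 2)
    · positivity
  have h2 : 0 < -(2 * b2 * lam21 * lam22 * Q1 / (H1 - H2)) := by
    rw [neg_pos]
    apply div_neg_of_neg_of_pos _ hd
    have : 0 < 2 * b2 * lam21 * lam22 := by positivity
    nlinarith
  linarith
end

section
/- Let fₗ : Ωₗ → ℝ², l = 1,…,n, be C¹ flux functions whose Jacobians Dfₗ(u) have eigenvalues λ₁ˡ(u) < 0 < λ₂ˡ(u) on Ωₗ, with uniform bounds 0 < λ_min^l < |λᵢˡ(u)| < λ_max^l. Define the dilatation factors Δ₁ = 1/λ_min¹ and Δₗ = (λ_max^{l−1}/λ_min^l)·Δ_{l−1}, and the glued flux F : Ω₁ × … × Ω_n → ℝ^{2n} by F_{2l−1}(U) = Δₗ·(fₗ)₁(U_{2l−1},U_{2l}), F_{2l}(U) = Δₗ·(fₗ)₂(U_{2l−1},U_{2l}). Then DF(U) is block-diagonal with blocks Δₗ·Dfₗ,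 its eigenvalues Λ_{2l−1} = Δₗλ₁ˡ and Λ_{2l} = Δₗλ₂ˡ satisfy −∏_{k=1}^{l} (λ_max^k/λ_min^k) ≤ Λ_{2l−1} < −∏_{k=1}^{l−1} (λ_max^k/λ_min^k) and ∏_{k=1}^{l−1} (λ_max^k/λ_min^k) < Λ_{2l} ≤ ∏_{k=1}^{l} (λ_max^k/λ_min^k); in particular Λ₁ < −1 < 1 < Λ₂ and all 2n eigenvalues are distinct from ±1 and ordered so that the glued system is strictly hyperbolic with a non-characteristic boundary at x = 0. -/
open Finset

/-- Eigenvalue bounds for the glued `(2n)×(2n)` flux: with dilatation factors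
`Δ₀ = 1/λ_min⁰`, `Δ_{l+1} = (λ_max^l / λ_min^{l+1}) Δ_l`, and eigenvalues
`λ₁ˡ ∈ (−λ_max^l, −λ_min^l)`, `λ₂ˡ ∈ (λ_min^l, λ_max^l)`, the rescaled
eigenvalues `Λ_{2l-1} = Δ_l λ₁ˡ`, `Λ_{2l} = Δ_l λ₂ˡ` satisfy
`−∏_{k≤l} (λ_max^k/λ_min^k) ≤ Λ_{2l-1} < −∏_{k≤l−1} (λ_max^k/λ_min^k)` and
`∏_{k≤l−1} (λ_max^k/λ_min^k) < Λ_{2l} ≤ ∏_{k≤l} (λ_max^k/λ_min^k)`;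
in particular `Λ₁ < −1 < 1 < Λ₂`. -/
theorem glued_flux_eigenvalue_bounds
    (lammin lammax lam1 lam2 Δ : ℕ → ℝ)
    (hmin : ∀ l, 0 < lammin l) (hminmax : ∀ l, lammin l < lammax l)
    (hlam1 : ∀ l, lammin l < -lam1 l ∧ -lam1 l < lammax l)
    (hlam2 : ∀ l, lammin l < lam2 l ∧ lam2 l < lammax l)
    (hΔ0 : Δ 0 = 1 / lammin 0)
    (hΔrec : ∀ l, Δ (l + 1) = lammax l / lammin (l + 1) * Δ l) :
    (∀ l : ℕ,
      (-(∏ k ∈ range (l + 1), lammax k / lammin k) ≤ Δ l * lam1 l ∧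
        Δ l * lam1 l < -(∏ k ∈ range l, lammax k / lammin k)) ∧
      ((∏ k ∈ range l, lammax k / lammin k) < Δ l * lam2 l ∧
        Δ l * lam2 l ≤ ∏ k ∈ range (l + 1), lammax k / lammin k)) ∧
    Δ 0 * lam1 0 < -1 ∧ 1 < Δ 0 * lam2 0 := by
  set P : ℕ → ℝ := fun l => ∏ k ∈ range l, lammax k / lammin k with hP
  have hPpos : ∀ l, 0 < P l := fun l =>
    Finset.prod_pos fun k _ => div_pos ((hmin k).trans (hminmax k)) (hmin k)
  have hΔ : ∀ l, Δ l = P l / lammin l := by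
    intro l
    induction l with
    | zero => simpa [hP] using hΔ0
    | succ n ih =>
        rw [hΔrec n, ih]
        simp only [hP, Finset.prod_range_succ]
        field_simp
  have key : ∀ l : ℕ,
      (-(P (l + 1)) ≤ Δ l * lam1 l ∧ Δ l * lam1 l < -(P l)) ∧
      (P l < Δ l * lam2 l ∧ Δ l * lam2 l ≤ P (l + 1)) := by
    intro l
    have hml := hmin l
    have h1 := hlam1 l
    have h2 := hlam2 l
    have hPl := hPpos l
    have hΔl := hΔ l
    have hPsucc : P (l + 1) = P l * (lammax l / lammin l) := by
      rw [hP]; exact Finset.prod_range_succ _ _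
    have hDl : Δ l * lam1 l = -(P l * (-lam1 l / lammin l)) := by
      rw [hΔl]; field_simp
    have hDl2 : Δ l * lam2 l = P l * (lam2 l / lammin l) := by
      rw [hΔl]; field_simp
    constructor
    · constructor
      · rw [hDl, hPsucc, neg_le_neg_iff]
        exact mul_le_mul_of_nonneg_left (le_of_lt ((div_lt_div_iff_of_pos_right hml).mpr h1.2)) hPl.le
      · rw [hDl, neg_lt_neg_iff]
        nlinarith [(one_lt_div hml).mpr h1.1]
    · constructor
      · rw [hDl2]
        nlinarith [(one_lt_div hml).mpr h2.1]
      · rw [hDl2, hPsucc]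
        exact mul_le_mul_of_nonneg_left (le_of_lt ((div_lt_div_iff_of_pos_right hml).mpr h2.2)) hPl.le
  refine ⟨key, ?_, ?_⟩
  · have := (key 0).1.2
    simpa [hP] using this
  · have := (key 0).2.1
    simpa [hP] using this
end

section
/- Let X be a metric space, D ⊆ X, T > 0, and F : {(τ,t₀) : t₀ ∈ [0,T], τ ∈ [0,T−t₀]} × D → D a local flow. Suppose there exist a constant C and a functional Φ on D × D, equivalent to the distance in the sense that (1/C)·d(p,p̃) ≤ Φ(p,p̃) ≤ C·d(p,p̃) for all p, p̃ ∈ D, such that for all ε > 0 small, all t₀, and all p, p̃ ∈ D, Φ(F_{ε,t₀}p, F_{ε,t₀}p̃) ≤ (1+Cε)Φ(p,p̃). Then the Euler ε-polygonal F^ε_{τ,t₀} = F_{τ−kε, t₀+kε} ∘ F_{ε,t₀+(k−1)ε} ∘ ⋯ ∘ F_{ε,t₀}, with k = ⌊τ/ε⌋, satisfies d(F^ε_{τ,t₀}(p), F^ε_{τ,t₀}(p̃)) ≤ C²·e^{Cτ}·d(p,p̃), uniformly in ε. -/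
open Set

/-- The iterated Euler steps of a local flow `F`: `k` steps of length `ε`
starting at initial time `t₀`. -/
def eulerSteps {X : Type*} (F : ℝ → ℝ → X → X) (ε t₀ : ℝ) : ℕ → X → X
  | 0, p => p
  | (k + 1), p => F ε (t₀ + k * ε) (eulerSteps F ε t₀ k p)

/-- Uniform Lipschitz estimate for Euler ε-polygonals: chaining the per-step
growth estimate `Φ(F_{η,t}p, F_{η,t}q) ≤ (1+Cη)Φ(p,q)` for a functional `Φ`
equivalent to the distance yields
`d(F^ε_{τ,t₀}p, F^ε_{τ,t₀}q) ≤ C² e^{Cτ} d(p,q)`, uniformly in `ε`. -/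
theorem euler_polygonal_lipschitz
    {X : Type*} [MetricSpace X] (D : Set X)
    (F : ℝ → ℝ → X → X) (Φ : X → X → ℝ)
    (C ε₀ T : ℝ) (hC : 0 < C) (hε₀ : 0 < ε₀) (hT : 0 < T)
    (hmaps : ∀ η ∈ Icc (0 : ℝ) ε₀, ∀ t₀ : ℝ, ∀ p ∈ D, F η t₀ p ∈ D)
    (hequiv : ∀ p ∈ D, ∀ q ∈ D,
      (1 / C) * dist p q ≤ Φ p q ∧ Φ p q ≤ C * dist p q)
    (hstep : ∀ η ∈ Icc (0 : ℝ) ε₀, ∀ t₀ : ℝ, ∀ p ∈ D, ∀ q ∈ D,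
      Φ (F η t₀ p) (F η t₀ q) ≤ (1 + C * η) * Φ p q)
    (ε : ℝ) (hε : 0 < ε) (hεε₀ : ε ≤ ε₀)
    (τ t₀ : ℝ) (hτ : τ ∈ Icc 0 T)
    (p : X) (hp : p ∈ D) (q : X) (hq : q ∈ D) :
    dist (F (τ - ⌊τ / ε⌋₊ * ε) (t₀ + ⌊τ / ε⌋₊ * ε) (eulerSteps F ε t₀ ⌊τ / ε⌋₊ p))
         (F (τ - ⌊τ / ε⌋₊ * ε) (t₀ + ⌊τ / ε⌋₊ * ε) (eulerSteps F ε t₀ ⌊τ / ε⌋₊ q))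
      ≤ C ^ 2 * Real.exp (C * τ) * dist p q := by
  have hεIcc : ε ∈ Icc (0 : ℝ) ε₀ := ⟨hε.le, hεε₀⟩
  have h1ε : (0:ℝ) ≤ 1 + C * ε := by nlinarith
  have key : ∀ k : ℕ, eulerSteps F ε t₀ k p ∈ D ∧ eulerSteps F ε t₀ k q ∈ D ∧
      Φ (eulerSteps F ε t₀ k p) (eulerSteps F ε t₀ k q) ≤ (1 + C * ε) ^ k * Φ p q := by
    intro k
    induction k with
    | zero => exact ⟨hp, hq, by simp [eulerSteps]⟩
    | succ k ih =>
      obtain ⟨hpk, hqk, hΦk⟩ := ih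
      refine ⟨hmaps ε hεIcc _ _ hpk, hmaps ε hεIcc _ _ hqk, ?_⟩
      have step := hstep ε hεIcc (t₀ + k * ε) _ hpk _ hqk
      have h2 := mul_le_mul_of_nonneg_left hΦk h1ε
      show Φ (F ε (t₀ + k * ε) (eulerSteps F ε t₀ k p))
          (F ε (t₀ + k * ε) (eulerSteps F ε t₀ k q)) ≤ (1 + C * ε) ^ (k+1) * Φ p q
      calc Φ (F ε (t₀ + k * ε) (eulerSteps F ε t₀ k p))
            (F ε (t₀ + k * ε) (eulerSteps F ε t₀ k q)) ≤
          (1 + C * ε) * Φ (eulerSteps F ε t₀ k p) (eulerSteps F ε t₀ k q) := step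
        _ ≤ (1 + C * ε) * ((1 + C * ε) ^ k * Φ p q) := h2
        _ = (1 + C * ε) ^ (k+1) * Φ p q := by ring
  set k := ⌊τ / ε⌋₊ with hk
  obtain ⟨hpk, hqk, hΦk⟩ := key k
  set η := τ - k * ε with hη
  have hkle : (k : ℝ) * ε ≤ τ := by
    have h := Nat.floor_le (div_nonneg hτ.1 hε.le)
    calc (k : ℝ) * ε ≤ (τ / ε) * ε := mul_le_mul_of_nonneg_right h hε.le
      _ = τ := by field_simp
  have hηnn : 0 ≤ η := by simp only [hη]; linarith
  have hηε : η ≤ ε := by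
    have h := Nat.lt_floor_add_one (τ / ε)
    have h2 : τ < ((k : ℝ) + 1) * ε := by
      calc τ = (τ / ε) * ε := by field_simp
        _ < ((k : ℝ) + 1) * ε := mul_lt_mul_of_pos_right (by exact_mod_cast h) hε
    simp only [hη]; nlinarith
  have hηIcc : η ∈ Icc (0 : ℝ) ε₀ := ⟨hηnn, hηε.trans hεε₀⟩
  have h1η : (0:ℝ) ≤ 1 + C * η := by nlinarith
  have hpow : (0:ℝ) ≤ (1 + C * ε) ^ k := pow_nonneg h1ε k
  set A := eulerSteps F ε t₀ k p
  set B := eulerSteps F ε t₀ k q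
  have hPD := hmaps η hηIcc (t₀ + k * ε) _ hpk
  have hQD := hmaps η hηIcc (t₀ + k * ε) _ hqk
  set P := F η (t₀ + k * ε) A
  set Q := F η (t₀ + k * ε) B
  have hΦfin : Φ P Q ≤ (1 + C * η) * ((1 + C * ε) ^ k * Φ p q) :=
    (hstep η hηIcc _ _ hpk _ hqk).trans (mul_le_mul_of_nonneg_left hΦk h1η)
  have hexp : (1 + C * η) * (1 + C * ε) ^ k ≤ Real.exp (C * τ) := by
    have h1 : 1 + C * η ≤ Real.exp (C * η) := by
      have := Real.add_one_le_exp (C * η); linarith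
    have h2 : (1 + C * ε) ^ k ≤ Real.exp (C * ε) ^ k := by
      apply pow_le_pow_left₀ h1ε
      have := Real.add_one_le_exp (C * ε); linarith
    calc (1 + C * η) * (1 + C * ε) ^ k ≤ Real.exp (C * η) * Real.exp (C * ε) ^ k :=
          mul_le_mul h1 h2 hpow (Real.exp_pos _).le
      _ = Real.exp (C * η + k * (C * ε)) := by
          rw [← Real.exp_nat_mul, ← Real.exp_add]
      _ = Real.exp (C * τ) := by rw [hη]; ring_nf
  have h1 := (hequiv _ hPD _ hQD).1
  have hΦpq : Φ p q ≤ C * dist p q := (hequiv p hp q hq).2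
  have hdΦ : dist P Q ≤ C * Φ P Q := by
    have h := mul_le_mul_of_nonneg_left h1 hC.le
    calc dist P Q = C * (1 / C * dist P Q) := by field_simp
      _ ≤ C * Φ P Q := h
  calc dist P Q ≤ C * Φ P Q := hdΦ
    _ ≤ C * ((1 + C * η) * ((1 + C * ε) ^ k * (C * dist p q))) := by
        apply mul_le_mul_of_nonneg_left _ hC.le
        exact hΦfin.trans (mul_le_mul_of_nonneg_left
          (mul_le_mul_of_nonneg_left hΦpq hpow) h1η)
    _ = C ^ 2 * ((1 + C * η) * (1 + C * ε) ^ k) * dist p q := by ring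
    _ ≤ C ^ 2 * Real.exp (C * τ) * dist p q :=
        mul_le_mul_of_nonneg_right
          (mul_le_mul_of_nonneg_left hexp (by positivity)) dist_nonneg
end
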